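/- arXiv:2211.06779 — 3 statements merged into one kernel-verified Lean document; each statement's English description precedes it below -/
import Mathlib

section
/- Let λ ∈ ℝ and let g : ℝ → (0,∞) be a Borel function such that log g is locally bounded. Define f : (−∞,0] × ℝ → (0,∞) by f(r,x) = g(x). Then f ∈ 𝔽_λ if and only if the following holds: when λ > 0, limsup_{x→−∞} log g(x)/|x| < λ (the limsup may be −∞) and lim_{x→∞} log g(x)/x exists and equals λ; when λ < 0, lim_{x→−∞} log g(x)/|x| exists and equals |λ| and limsup_{x→∞} log g(x)/x < |λ| (the limsup may be −∞); when λ = 0, limsup_{|x|→∞} log g(x)/|x| ≤ 0 (the limsup may be −∞). -/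
open MeasureTheory Filter

/-- Membership in the class `𝔽_λ` of admissible initial data.
The liminf/limsup conditions (W1)–(W3) and (W'') are expressed in their equivalent
ε-form, which also covers the extended values `±∞`. -/
def MemF (lam : ℝ) (f : ℝ → ℝ → ℝ) : Prop :=
  (∀ r ≤ (0 : ℝ), Measurable (f r)) ∧ (∀ r ≤ (0 : ℝ), ∀ x : ℝ, 0 < f r x) ∧
  (if lam = 0 then
    ∃ δ₀ > (0 : ℝ), ∃ c > (0 : ℝ),
      (∀ δ ∈ Set.Ioc (0 : ℝ) δ₀, ∀ ε > (0 : ℝ), ∃ R < (0 : ℝ), ∀ r ≤ R, ∀ x : ℝ,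
          δ * |r| ≤ |x| → Real.log (f r x) ≤ ε * (|r| + |x|)) ∧
      (∀ ε > (0 : ℝ), ∃ R < (0 : ℝ), ∀ r ≤ R,
          ENNReal.ofReal (Real.exp (-(ε * |r|))) ≤
            ∫⁻ x in Set.Icc (-c) c, ENNReal.ofReal (f r x))
  else
    ∃ δ₀ ∈ Set.Ioo (0 : ℝ) (|lam|),
      (∀ ε > (0 : ℝ), ∃ R < (0 : ℝ), ∀ r ≤ R, ∀ x : ℝ,
          |x / r + lam| ≤ δ₀ → -(ε * |r|) ≤ Real.log (f r x) - lam * x) ∧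
      (∀ δ ∈ Set.Ioc (0 : ℝ) δ₀, ∀ ε > (0 : ℝ), ∃ R < (0 : ℝ), ∀ r ≤ R, ∀ x : ℝ,
          0 ≤ lam * x → δ ≤ |x / r + lam| →
          Real.log (f r x) - lam * x ≤ ε * (|r| + |x|)) ∧
      (∃ μ : ℝ, -1 < μ / lam ∧
        ∀ ε > (0 : ℝ), ∃ R < (0 : ℝ), ∀ r ≤ R, ∀ x : ℝ, lam * x ≤ 0 →
          Real.log (f r x) - μ * x ≤ ε * (|r| + |x|)))

/-! Since `f (r, x) = g x` does not depend on `r`, each condition defining `𝔽_λ` can be tested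
at a single `r` in one direction, while in the other direction `ε |r|` absorbs any constant once
`r` is negative enough. Testing (W1) at `r = -x / λ`, where `x / r + λ = 0`, gives
`liminf log g(x) / x ≥ λ` at `+∞`; (W2) gives `limsup log g(x) / x ≤ λ` there; (W3) is the bound
at `-∞`; the local boundedness of `log g` controls the compact part. For `λ = 0` the growth
condition is the sublinear bound at `±∞`, and the mass condition follows from a lower bound of `g`
on `[-1, 1]`. The reflection `x ↦ -x` exchanges `𝔽_λ` and `𝔽_{-λ}`, reducing `λ < 0` to
`λ > 0`. -/

open Real Set

theorem MemF.comp_neg {lam : ℝ} {f : ℝ → ℝ → ℝ} (h : MemF lam f) :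
    MemF (-lam) (fun r x => f r (-x)) := by
  obtain ⟨hmeas, hpos, h⟩ := h
  refine ⟨fun r hr => (hmeas r hr).comp measurable_neg, fun r hr x => hpos r hr (-x), ?_⟩
  by_cases hlam : lam = 0
  · subst hlam
    rw [if_pos rfl] at h
    rw [neg_zero, if_pos rfl]
    obtain ⟨δ₀, hδ₀, c, hc, hgrowth, hmass⟩ := h
    refine ⟨δ₀, hδ₀, c, hc, fun δ hδ ε hε => ?_, fun ε hε => ?_⟩
    · obtain ⟨R, hR, hR'⟩ := hgrowth δ hδ ε hε
      exact ⟨R, hR, fun r hr x hx => by simpa using hR' r hr (-x) (by rwa [abs_neg])⟩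
    · obtain ⟨R, hR, hR'⟩ := hmass ε hε
      refine ⟨R, hR, fun r hr => (hR' r hr).trans_eq ?_⟩
      have := (Measure.measurePreserving_neg volume).setLIntegral_comp_preimage
        measurableSet_Icc (hmeas r (hr.trans hR.le)).ennreal_ofReal (s := Icc (-c) c)
      rw [Set.neg_preimage, Set.neg_Icc, neg_neg] at this
      exact this.symm
  · rw [if_neg hlam] at h
    rw [if_neg (neg_ne_zero.2 hlam)]
    obtain ⟨δ₀, hδ₀, hW1, hW2, μ, hμ, hW3⟩ := h
    have hflip : ∀ r x : ℝ, |x / r + -lam| = |-x / r + lam| := fun r x => by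
      rw [← abs_neg]; ring_nf
    refine ⟨δ₀, by rwa [abs_neg], fun ε hε => ?_, fun δ hδ ε hε => ?_,
      -μ, by rwa [neg_div_neg_eq], fun ε hε => ?_⟩
    · obtain ⟨R, hR, hR'⟩ := hW1 ε hε
      refine ⟨R, hR, fun r hr x hx => ?_⟩
      have := hR' r hr (-x) (by rwa [← hflip])
      linarith
    · obtain ⟨R, hR, hR'⟩ := hW2 δ hδ ε hε
      refine ⟨R, hR, fun r hr x hx hδx => ?_⟩
      have := hR' r hr (-x) (by linarith) (by rwa [← hflip])
      rw [abs_neg] at this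
      linarith
    · obtain ⟨R, hR, hR'⟩ := hW3 ε hε
      refine ⟨R, hR, fun r hr x hx => ?_⟩
      have := hR' r hr (-x) (by linarith)
      rw [abs_neg] at this
      linarith

theorem memF_comp_neg_iff {lam : ℝ} {f : ℝ → ℝ → ℝ} :
    MemF (-lam) (fun r x => f r (-x)) ↔ MemF lam f :=
  ⟨fun h => by simpa using h.comp_neg, MemF.comp_neg⟩

theorem exists_neg_forall_le_mul_abs {ε : ℝ} (hε : 0 < ε) (C : ℝ) :
    ∃ R < 0, ∀ r ≤ R, C ≤ ε * |r| := by
  have : Tendsto (fun r : ℝ => ε * |r|) atBot atTop :=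
    tendsto_abs_atBot_atTop.const_mul_atTop hε
  obtain ⟨R, hR⟩ := eventually_atBot.1 ((this.eventually_ge_atTop C).and (eventually_lt_atBot 0))
  exact ⟨R, (hR R le_rfl).2, fun r hr => (hR r hr).1⟩

theorem exists_forall_sub_mul_le {L : ℝ → ℝ} (hL : ∀ K, IsCompact K → ∃ M, ∀ x ∈ K, L x ≤ M)
    (μ : ℝ) : ∀ K, IsCompact K → ∃ M, ∀ x ∈ K, L x - μ * x ≤ M := by
  intro K hK
  obtain ⟨M, hM⟩ := hL K hK
  obtain ⟨C, hC⟩ := hK.isBounded.exists_norm_le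
  refine ⟨M + |μ| * C, fun x hx => ?_⟩
  have hμx : -(μ * x) ≤ |μ| * C :=
    calc -(μ * x) ≤ |μ * x| := neg_le_abs _
      _ = |μ| * ‖x‖ := abs_mul μ x
      _ ≤ |μ| * C := by gcongr; exact hC x hx
  linarith [hM x hx]

theorem forall_exists_le_mul_abs_add_abs {h : ℝ → ℝ} {P : ℝ → Prop}
    (hbdd : ∀ K, IsCompact K → ∃ M, ∀ x ∈ K, h x ≤ M)
    (hev : ∀ ε > 0, ∀ᶠ x in cocompact ℝ, P x → h x ≤ ε * |x|) :
    ∀ ε > 0, ∃ R < 0, ∀ r ≤ R, ∀ x, P x → h x ≤ ε * (|r| + |x|) := by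
  intro ε hε
  obtain ⟨K, hK, hKc⟩ := mem_cocompact.1 (hev ε hε)
  obtain ⟨M, hM⟩ := hbdd K hK
  obtain ⟨R, hR, hMr⟩ := exists_neg_forall_le_mul_abs hε M
  refine ⟨R, hR, fun r hr x hx => ?_⟩
  have := hMr r hr
  by_cases hxK : x ∈ K
  · nlinarith [hM x hxK, abs_nonneg x]
  · nlinarith [hKc hxK hx, abs_nonneg r]

theorem tendsto_div_atTop_nhds_iff {L : ℝ → ℝ} {a : ℝ} :
    Tendsto (fun x => L x / x) atTop (nhds a) ↔
      (∀ ε > 0, ∀ᶠ x in atTop, -(ε * x) ≤ L x - a * x) ∧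
        ∀ ε > 0, ∀ᶠ x in atTop, L x - a * x ≤ ε * x := by
  rw [tendsto_order]
  refine and_congr ⟨fun h ε hε => ?_, fun h b hb => ?_⟩ ⟨fun h ε hε => ?_, fun h b hb => ?_⟩
  · filter_upwards [h (a - ε) (by linarith), eventually_gt_atTop 0] with x hx hx0
    rw [lt_div_iff₀ hx0] at hx
    linarith
  · filter_upwards [h ((a - b) / 2) (by linarith), eventually_gt_atTop 0] with x hx hx0
    rw [lt_div_iff₀ hx0]
    nlinarith
  · filter_upwards [h (a + ε) (by linarith), eventually_gt_atTop 0] with x hx hx0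
    rw [div_lt_iff₀ hx0] at hx
    linarith
  · filter_upwards [h ((b - a) / 2) (by linarith), eventually_gt_atTop 0] with x hx hx0
    rw [div_lt_iff₀ hx0]
    nlinarith

section PositiveRate

variable {L : ℝ → ℝ} {lam : ℝ}

theorem w1_iff_of_pos {δ₀ : ℝ} (hδ₀ : 0 ≤ δ₀) (hδ₀lam : δ₀ < lam) :
    (∀ ε > 0, ∃ R < 0, ∀ r ≤ R, ∀ x, |x / r + lam| ≤ δ₀ → -(ε * |r|) ≤ L x - lam * x) ↔
      ∀ ε > 0, ∀ᶠ x in atTop, -(ε * x) ≤ L x - lam * x := by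
  have hlam : 0 < lam := hδ₀.trans_lt hδ₀lam
  constructor
  · intro h ε hε
    obtain ⟨R, hR, hR'⟩ := h (ε * lam) (by positivity)
    filter_upwards [eventually_ge_atTop (lam * -R)] with x hx
    have hx0 : 0 < x := by nlinarith
    have hr : -x / lam ≤ R := by rw [div_le_iff₀ hlam]; linarith
    have hray : x / (-x / lam) + lam = 0 := by field_simp; ring
    have := hR' (-x / lam) hr x (by rw [hray, abs_zero]; exact hδ₀)
    rwa [abs_of_neg (hr.trans_lt hR), mul_assoc, neg_div, neg_neg, mul_div_cancel₀ _ hlam.ne']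
      at this
  · intro h ε hε
    obtain ⟨X, hX⟩ := eventually_atTop.1 (h (ε / (lam + δ₀)) (by positivity))
    obtain ⟨R, hR, hXr⟩ := exists_neg_forall_le_mul_abs (sub_pos.2 hδ₀lam) X
    refine ⟨R, hR, fun r hr x hx => ?_⟩
    have hr0 : r < 0 := hr.trans_lt hR
    have hXr := hXr r hr
    rw [abs_of_neg hr0] at hXr ⊢
    obtain ⟨h1, h2⟩ := abs_le.1 hx
    have hxr : x = x / r * r := (div_mul_cancel₀ x hr0.ne).symm
    have hxlo : (lam - δ₀) * -r ≤ x := by nlinarith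
    have hxhi : x ≤ (lam + δ₀) * -r := by nlinarith
    calc -(ε * -r) = -(ε / (lam + δ₀) * ((lam + δ₀) * -r)) := by field_simp
      _ ≤ -(ε / (lam + δ₀) * x) := by gcongr
      _ ≤ L x - lam * x := hX x (by linarith)

theorem w2_iff_of_pos {δ : ℝ} (hlam : 0 < lam)
    (hbdd : ∀ K, IsCompact K → ∃ M, ∀ x ∈ K, L x ≤ M) :
    (∀ ε > 0, ∃ R < 0, ∀ r ≤ R, ∀ x, 0 ≤ lam * x → δ ≤ |x / r + lam| →
        L x - lam * x ≤ ε * (|r| + |x|)) ↔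
      ∀ ε > 0, ∀ᶠ x in atTop, L x - lam * x ≤ ε * x := by
  constructor
  · intro h ε hε
    obtain ⟨R, hR, hR'⟩ := h (ε / 2) (by positivity)
    filter_upwards [eventually_ge_atTop ((lam + δ) * -R), eventually_ge_atTop (-R)]
      with x hx hxR
    have hx0 : 0 < x := by linarith
    have hδx : δ ≤ |x / R + lam| := by
      have : x / R ≤ -(lam + δ) := by rw [div_le_iff_of_neg hR]; linarith
      exact le_abs.2 (Or.inr (by linarith))
    have := hR' R le_rfl x (by positivity) hδx
    rw [abs_of_neg hR, abs_of_pos hx0] at this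
    nlinarith
  · intro h
    have hev : ∀ ε > 0, ∀ᶠ x in cocompact ℝ, 0 ≤ lam * x → L x - lam * x ≤ ε * |x| := by
      intro ε hε
      rw [cocompact_eq_atBot_atTop, eventually_sup]
      constructor
      · filter_upwards [eventually_lt_atBot 0] with x hx0 hx
        nlinarith
      · filter_upwards [h ε hε, eventually_ge_atTop 0] with x hx hx0 _
        rwa [abs_of_nonneg hx0]
    intro ε hε
    obtain ⟨R, hR, hR'⟩ :=
      forall_exists_le_mul_abs_add_abs (exists_forall_sub_mul_le hbdd lam) hev ε hε
    exact ⟨R, hR, fun r hr x hx _ => hR' r hr x hx⟩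

theorem w3_iff_of_pos (hlam : 0 < lam) (hbdd : ∀ K, IsCompact K → ∃ M, ∀ x ∈ K, L x ≤ M) :
    (∃ μ, -1 < μ / lam ∧
        ∀ ε > 0, ∃ R < 0, ∀ r ≤ R, ∀ x, lam * x ≤ 0 → L x - μ * x ≤ ε * (|r| + |x|)) ↔
      ∃ m < lam, ∀ᶠ x in atBot, L x / |x| ≤ m := by
  constructor
  · rintro ⟨μ, hμ, h⟩
    have hμ' : -lam < μ := by rwa [lt_div_iff₀ hlam, neg_one_mul] at hμ
    obtain ⟨R, hR, hR'⟩ := h ((lam + μ) / 4) (by linarith)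
    refine ⟨(lam - μ) / 2, by linarith, ?_⟩
    filter_upwards [eventually_le_atBot R] with x hx
    have hx0 : x < 0 := hx.trans_lt hR
    have := hR' R le_rfl x (by nlinarith)
    rw [abs_of_neg hR, abs_of_neg hx0] at this
    rw [abs_of_neg hx0, div_le_iff₀ (by linarith)]
    nlinarith
  · rintro ⟨m, hm, h⟩
    refine ⟨-m, by rw [lt_div_iff₀ hlam]; linarith,
      forall_exists_le_mul_abs_add_abs (exists_forall_sub_mul_le hbdd (-m)) fun ε hε => ?_⟩
    rw [cocompact_eq_atBot_atTop, eventually_sup]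
    constructor
    · filter_upwards [h, eventually_lt_atBot 0] with x hx hx0 _
      rw [abs_of_neg hx0, div_le_iff₀ (by linarith)] at hx
      rw [abs_of_neg hx0]
      nlinarith
    · filter_upwards [eventually_gt_atTop 0] with x hx0 hx
      nlinarith

end PositiveRate

theorem memF_const_iff_of_pos {lam : ℝ} {g : ℝ → ℝ} (hlam : 0 < lam) (hg_meas : Measurable g)
    (hg_pos : ∀ x, 0 < g x) (hbdd : ∀ K, IsCompact K → ∃ M, ∀ x ∈ K, log (g x) ≤ M) :
    MemF lam (fun _ x => g x) ↔
      (∃ m < lam, ∀ᶠ x in atBot, log (g x) / |x| ≤ m) ∧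
        Tendsto (fun x => log (g x) / x) atTop (nhds lam) := by
  simp only [MemF, if_neg hlam.ne', abs_of_pos hlam, tendsto_div_atTop_nhds_iff]
  constructor
  · rintro ⟨-, -, δ₀, ⟨hδ₀, hδ₀lam⟩, hW1, hW2, hW3⟩
    exact ⟨(w3_iff_of_pos hlam hbdd).1 hW3, (w1_iff_of_pos hδ₀.le hδ₀lam).1 hW1,
      (w2_iff_of_pos hlam hbdd).1 (hW2 δ₀ ⟨hδ₀, le_rfl⟩)⟩
  · rintro ⟨hW3, hlow, hup⟩
    exact ⟨fun _ _ => hg_meas, fun _ _ => hg_pos, lam / 2, ⟨half_pos hlam, by linarith⟩,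
      (w1_iff_of_pos (by linarith) (by linarith)).2 hlow,
      fun _ _ => (w2_iff_of_pos hlam hbdd).2 hup, (w3_iff_of_pos hlam hbdd).2 hW3⟩

theorem w''_growth_iff {L : ℝ → ℝ} {δ : ℝ} (hδ : 0 < δ) :
    (∀ ε > 0, ∃ R < 0, ∀ r ≤ R, ∀ x, δ * |r| ≤ |x| → L x ≤ ε * (|r| + |x|)) ↔
      ∀ ε > 0, ∃ M > 0, ∀ x, M ≤ |x| → L x / |x| ≤ ε := by
  constructor
  · intro h ε hε
    obtain ⟨R, hR, hR'⟩ := h (ε * δ / (δ + 1)) (by positivity)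
    have hRδ : 0 < δ * |R| := mul_pos hδ (abs_pos.2 hR.ne)
    refine ⟨δ * |R|, hRδ, fun x hx => ?_⟩
    have := hR' R le_rfl x hx
    have hR_le : |R| ≤ |x| / δ := by rw [le_div_iff₀ hδ]; linarith
    rw [div_le_iff₀ (by linarith)]
    calc L x ≤ ε * δ / (δ + 1) * (|R| + |x|) := this
      _ ≤ ε * δ / (δ + 1) * (|x| / δ + |x|) := by gcongr
      _ = ε * |x| := by field_simp; ring
  · intro h ε hε
    obtain ⟨M, hM, hM'⟩ := h ε hε
    obtain ⟨R, hR, hMr⟩ := exists_neg_forall_le_mul_abs hδ M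
    refine ⟨R, hR, fun r hr x hx => ?_⟩
    have hx0 : 0 < |x| := by linarith [hMr r hr]
    have := hM' x (by linarith [hMr r hr])
    rw [div_le_iff₀ hx0] at this
    nlinarith [abs_nonneg r]

theorem w''_mass {g : ℝ → ℝ} (hg : Measurable g) {c : ℝ} (hc : 0 < c)
    (hgc : ∀ x ∈ Icc (-1 : ℝ) 1, c ≤ g x) :
    ∀ ε > 0, ∃ R < 0, ∀ r ≤ R,
      ENNReal.ofReal (exp (-(ε * |r|))) ≤ ∫⁻ x in Icc (-1) 1, ENNReal.ofReal (g x) := by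
  intro ε hε
  obtain ⟨R, hR, hR'⟩ := exists_neg_forall_le_mul_abs hε (-log c)
  refine ⟨R, hR, fun r hr => ?_⟩
  calc ENNReal.ofReal (exp (-(ε * |r|))) ≤ ENNReal.ofReal c := by
        refine ENNReal.ofReal_le_ofReal ?_
        rw [← exp_log hc, exp_le_exp]
        linarith [hR' r hr]
    _ ≤ ENNReal.ofReal c * volume (Icc (-1 : ℝ) 1) := by
        refine le_mul_of_one_le_right' ?_
        rw [Real.volume_Icc]
        exact ENNReal.one_le_ofReal.2 (by norm_num)
    _ = ∫⁻ _ in Icc (-1) 1, ENNReal.ofReal c := (setLIntegral_const _ _).symm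
    _ ≤ ∫⁻ x in Icc (-1) 1, ENNReal.ofReal (g x) :=
        setLIntegral_mono hg.ennreal_ofReal fun x hx => ENNReal.ofReal_le_ofReal (hgc x hx)

theorem memF_zero_const_iff {g : ℝ → ℝ} (hg_meas : Measurable g) (hg_pos : ∀ x, 0 < g x)
    {c : ℝ} (hc : 0 < c) (hgc : ∀ x ∈ Icc (-1 : ℝ) 1, c ≤ g x) :
    MemF 0 (fun _ x => g x) ↔ ∀ ε > 0, ∃ M > 0, ∀ x, M ≤ |x| → log (g x) / |x| ≤ ε := by
  simp only [MemF]
  constructor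
  · rintro ⟨-, -, δ₀, hδ₀, -, -, hgrowth, -⟩
    exact (w''_growth_iff hδ₀).1 (hgrowth δ₀ ⟨hδ₀, le_rfl⟩)
  · intro h
    exact ⟨fun _ _ => hg_meas, fun _ _ => hg_pos, 1, one_pos, 1, one_pos,
      fun δ hδ => (w''_growth_iff hδ.1).2 h, w''_mass hg_meas hc hgc⟩

theorem eventually_atBot_comp_neg {p : ℝ → Prop} :
    (∀ᶠ y in atBot, p (-y)) ↔ ∀ᶠ x in atTop, p x :=
  ⟨fun h => by simpa using tendsto_neg_atTop_atBot.eventually h,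
    fun h => tendsto_neg_atBot_atTop.eventually h⟩

theorem tendsto_div_abs_atBot_iff_comp_neg {L : ℝ → ℝ} {a : ℝ} :
    Tendsto (fun x => L x / |x|) atBot (nhds a) ↔
      Tendsto (fun y => L (-y) / y) atTop (nhds a) := by
  rw [← tendsto_comp_neg_atTop_iff]
  refine tendsto_congr' ?_
  filter_upwards [eventually_ge_atTop 0] with y hy
  rw [abs_neg, abs_of_nonneg hy]

theorem eventually_div_atTop_le_iff_comp_neg {L : ℝ → ℝ} {m : ℝ} :
    (∀ᶠ x in atTop, L x / x ≤ m) ↔ ∀ᶠ y in atBot, L (-y) / |y| ≤ m := by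
  rw [← eventually_atBot_comp_neg]
  refine eventually_congr ?_
  filter_upwards [eventually_le_atBot 0] with y hy
  rw [abs_of_nonpos hy]

/-- "limsup < λ (possibly −∞)" is encoded as "∃ m < λ with the function eventually ≤ m",
and "limsup ≤ 0 (possibly −∞)" in its ε-form. -/
theorem membership_in_F_characterization
    (lam : ℝ) (g : ℝ → ℝ)
    (hg_meas : Measurable g) (hg_pos : ∀ x, 0 < g x)
    (hg_locbdd : ∀ K : Set ℝ, IsCompact K → ∃ M : ℝ, ∀ x ∈ K, |Real.log (g x)| ≤ M) :
    MemF lam (fun _ x => g x) ↔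
      ((0 < lam →
          ((∃ m < lam, ∀ᶠ x in atBot, Real.log (g x) / |x| ≤ m) ∧
            Tendsto (fun x => Real.log (g x) / x) atTop (nhds lam))) ∧
        (lam < 0 →
          (Tendsto (fun x => Real.log (g x) / |x|) atBot (nhds (|lam|)) ∧
            (∃ m < |lam|, ∀ᶠ x in atTop, Real.log (g x) / x ≤ m))) ∧
        (lam = 0 →
          ∀ ε > (0 : ℝ), ∃ M > (0 : ℝ), ∀ x : ℝ, M ≤ |x| → Real.log (g x) / |x| ≤ ε)) := by
  have hbdd : ∀ K, IsCompact K → ∃ M, ∀ x ∈ K, log (g x) ≤ M := fun K hK =>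
    (hg_locbdd K hK).imp fun M hM x hx => (abs_le.1 (hM x hx)).2
  rcases lt_trichotomy lam 0 with hlam | rfl | hlam
  · have hbdd_neg : ∀ K, IsCompact K → ∃ M, ∀ x ∈ K, log (g (-x)) ≤ M := fun K hK =>
      (hbdd (-K) hK.neg).imp fun M hM x hx => hM (-x) (Set.neg_mem_neg.2 hx)
    rw [← memF_comp_neg_iff, memF_const_iff_of_pos (g := fun x => g (-x)) (neg_pos.2 hlam)
      (hg_meas.comp measurable_neg) (fun x => hg_pos (-x)) hbdd_neg, abs_of_neg hlam,
      tendsto_div_abs_atBot_iff_comp_neg]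
    simp only [eventually_div_atTop_le_iff_comp_neg, hlam, hlam.not_gt, hlam.ne, true_implies,
      false_implies, and_true, true_and]
    exact and_comm
  · obtain ⟨M, hM⟩ := hg_locbdd (Icc (-1) 1) isCompact_Icc
    have hgM : ∀ x ∈ Icc (-1 : ℝ) 1, exp (-M) ≤ g x := fun x hx => by
      rw [← exp_log (hg_pos x), exp_le_exp]
      linarith [(abs_le.1 (hM x hx)).1]
    rw [memF_zero_const_iff hg_meas hg_pos (exp_pos (-M)) hgM]
    simp only [lt_irrefl, false_implies, true_implies, true_and]
  · rw [memF_const_iff_of_pos hlam hg_meas hg_pos hbdd]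
    simp only [hlam, hlam.not_gt, hlam.ne', true_implies, false_implies, and_true]
end

section
/- Equip the space of Borel measures on ℝ with the σ-algebra generated by the evaluation maps μ ↦ μ(B) over Borel sets B ⊆ ℝ. Then the set { μ : there exists a continuous function f : ℝ → (0,∞) such that μ(B) = ∫_B f(x) dx for every Borel set B } is a measurable subset of this space of measures. -/
/-!
A continuous nonnegative density is determined by the measure it defines, so the set of
measures in question is the injective image of the Gδ set of positive functions in the Polish
space `C(ℝ, ℝ)` under the measurable map `f ↦ volume.withDensity f`. Locally finite measures on
`ℝ` are separated by the countably many evaluations `μ ↦ μ (Ioo p q)`, `p q ∈ ℚ`; through them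
the Lusin–Souslin theorem applies and shows that this image is measurable.
-/

open MeasureTheory Set
open scoped ENNReal

namespace MeasureTheory.Measure

def ratIooMass (μ : Measure ℝ) : ℚ × ℚ → ℝ≥0∞ := fun pq => μ (Ioo pq.1 pq.2)

theorem measurable_ratIooMass : Measurable ratIooMass :=
  measurable_pi_iff.mpr fun _ => Measure.measurable_coe measurableSet_Ioo

theorem eq_of_ratIooMass_eq {μ ν : Measure ℝ} [IsLocallyFiniteMeasure ν]
    (h : μ.ratIooMass = ν.ratIooMass) : μ = ν := by
  have : IsLocallyFiniteMeasure μ := ⟨fun x => by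
    obtain ⟨p, hp⟩ := exists_rat_lt x
    obtain ⟨q, hq⟩ := exists_rat_gt x
    refine ⟨Ioo (p : ℝ) q, Ioo_mem_nhds hp hq, ?_⟩
    rw [show μ (Ioo (p : ℝ) q) = ν (Ioo (p : ℝ) q) from congr_fun h (p, q)]
    exact measure_Ioo_lt_top⟩
  exact Real.measure_ext_Ioo_rat fun p q => congr_fun h (p, q)

theorem measurableSet_image_of_measurable_injOn {γ : Type*} [MeasurableSpace γ]
    [StandardBorelSpace γ] {P : γ → Measure ℝ} {s : Set γ} (hs : MeasurableSet s)
    (hP : Measurable P) (hinj : InjOn P s) (hfin : ∀ g ∈ s, IsLocallyFiniteMeasure (P g)) :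
    MeasurableSet (P '' s) := by
  have hpre : P '' s = ratIooMass ⁻¹' (ratIooMass ∘ P '' s) := by
    refine Subset.antisymm (fun _ ⟨g, hg, hgμ⟩ => ⟨g, hg, by rw [← hgμ]; rfl⟩) ?_
    rintro μ ⟨g, hg, hgμ⟩
    have := hfin g hg
    exact ⟨g, hg, (eq_of_ratIooMass_eq hgμ.symm).symm⟩
  rw [hpre]
  refine measurable_ratIooMass (hs.image_of_measurable_injOn
    (measurable_ratIooMass.comp hP) fun f hf g hg hfg => hinj hf hg ?_)
  have := hfin g hg
  exact eq_of_ratIooMass_eq hfg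

end MeasureTheory.Measure

namespace ContinuousMap

variable {X : Type*} [TopologicalSpace X]

theorem isGδ_setOf_forall_mem {Y : Type*} [TopologicalSpace Y] [SigmaCompactSpace X]
    {U : Set Y} (hU : IsOpen U) : IsGδ {f : C(X, Y) | ∀ x, f x ∈ U} := by
  have : {f : C(X, Y) | ∀ x, f x ∈ U} =
      ⋂ n, {f : C(X, Y) | MapsTo f (compactCovering X n) U} := by
    ext f
    simp only [mem_ofPred_eq, mem_iInter]
    refine ⟨fun h n x _ => h x, fun h x => ?_⟩
    obtain ⟨n, hn⟩ := mem_iUnion.mp ((iUnion_compactCovering X).symm ▸ mem_univ x)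
    exact h n hn
  rw [this]
  exact .iInter_of_isOpen fun n => isOpen_setOfPred_mapsTo (isCompact_compactCovering X n) hU

variable [MeasurableSpace X] (μ : Measure X)

theorem measurable_withDensity_ofReal [BorelSpace X] [SecondCountableTopology X]
    [LocallyCompactSpace X] [MeasurableSpace C(X, ℝ)] [BorelSpace C(X, ℝ)] [SFinite μ] :
    Measurable fun f : C(X, ℝ) => μ.withDensity fun x => ENNReal.ofReal (f x) := by
  refine Measure.measurable_of_measurable_coe _ fun s hs => ?_
  simp only [withDensity_apply _ hs]
  exact (ENNReal.measurable_ofReal.comp continuous_eval.measurable).lintegral_prod_right'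

theorem injOn_withDensity_ofReal [OpensMeasurableSpace X] [SigmaFinite μ] [μ.IsOpenPosMeasure] :
    InjOn (fun f : C(X, ℝ) => μ.withDensity fun x => ENNReal.ofReal (f x))
      {f | ∀ x, 0 ≤ f x} := by
  intro f hf g hg hfg
  have hc (h : C(X, ℝ)) : Continuous fun x => ENNReal.ofReal (h x) :=
    ENNReal.continuous_ofReal.comp h.continuous
  rw [withDensity_eq_iff_of_sigmaFinite (by fun_prop) (by fun_prop),
    (hc f).ae_eq_iff_eq μ (hc g)] at hfg
  ext x
  exact (ENNReal.ofReal_eq_ofReal_iff (hf x) (hg x)).mp (congr_fun hfg x)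

end ContinuousMap

/-- Lemma `lm:density`: in the space of Borel measures on ℝ (with the σ-algebra
generated by evaluation on Borel sets, which is the canonical measurable-space
structure on `Measure ℝ`), the set of measures admitting a strictly positive
continuous Lebesgue density is measurable. -/
theorem measures_with_positive_continuous_density_measurable :
    MeasurableSet {μ : Measure ℝ |
      ∃ f : ℝ → ℝ, Continuous f ∧ (∀ x, 0 < f x) ∧
        ∀ B : Set ℝ, MeasurableSet B → μ B = ∫⁻ x in B, ENNReal.ofReal (f x)} := by
  borelize C(ℝ, ℝ)
  have hset : {μ : Measure ℝ | ∃ f : ℝ → ℝ, Continuous f ∧ (∀ x, 0 < f x) ∧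
        ∀ B : Set ℝ, MeasurableSet B → μ B = ∫⁻ x in B, ENNReal.ofReal (f x)} =
      (fun f : C(ℝ, ℝ) => volume.withDensity fun x => ENNReal.ofReal (f x)) ''
        {f | ∀ x, 0 < f x} := by
    ext μ
    constructor
    · rintro ⟨f, hf, hpos, hμ⟩
      refine ⟨⟨f, hf⟩, hpos, Measure.ext fun B hB => ?_⟩
      exact (withDensity_apply _ hB).trans (hμ B hB).symm
    · rintro ⟨f, hpos, rfl⟩
      exact ⟨f, f.continuous, hpos, fun B hB => withDensity_apply _ hB⟩
  rw [hset]
  exact Measure.measurableSet_image_of_measurable_injOn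
    (ContinuousMap.isGδ_setOf_forall_mem isOpen_Ioi).measurableSet
    (ContinuousMap.measurable_withDensity_ofReal volume)
    ((ContinuousMap.injOn_withDensity_ofReal volume).mono fun f hf x => (hf x).le)
    fun f _ => .withDensity_ofReal f.continuous
end

section
/- Let K : ℝ × ℝ → (0,∞) be a Borel function (first argument the 'terminal' point, second the 'initial' point) that is strictly totally positive of order 2 in the following sense: for all x < y and v < w, K(y,v)/K(x,v) < K(y,w)/K(x,w). Then: (i) for all x < y, every z ∈ ℝ, and every Borel function f : ℝ → [0,∞) for which the four integrals below are finite and nonzero, ∫_{−∞}^{z} K(y,w) f(w) dw / ∫_{−∞}^{z} K(x,w) f(w) dw < K(y,z)/K(x,z) < ∫_{z}^{∞} K(y,w) f(w) dw / ∫_{z}^{∞} K(x,w) f(w) dw; and (ii) symmetrically in the initial variable: for all v < z, every x ∈ ℝ, and every Borel f : ℝ → [0,∞) for which the four integrals below are finite and nonzero, ∫_{−∞}^{x} K(u,z) f(u) du / ∫_{−∞}^{x} K(u,v) f(u) du < K(x,z)/K(x,v) < ∫_{x}^{∞} K(u,z) f(u) du / ∫_{x}^{∞} K(u,v) f(u)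 du. -/
/-!
Strict total positivity of order two says exactly that `w ↦ K y w / K x w` is strictly
increasing when `x < y`. Hence on `{w < z}` the integrand `K y w * f w` lies below
`(K y z / K x z) * K x w * f w`, strictly wherever `f w > 0`, and integrating gives the left
inequality; `{w > z}` gives the right one. In the initial variable the statement is the same
one for the transposed kernel, which is again strictly totally positive of order two.
-/

open MeasureTheory Set

section RatioOfIntegrals

variable {α : Type*} [MeasurableSpace α] {μ : Measure α} {p q f w : α → ℝ} {c : ℝ}

theorem integral_mul_lt_integral_mul (hpq : ∀ᵐ a ∂μ, p a < q a) (hf : ∀ᵐ a ∂μ, 0 ≤ f a)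
    (hp : Integrable (fun a => p a * f a) μ) (hq : Integrable (fun a => q a * f a) μ)
    (hw : ∫ a, w a * f a ∂μ ≠ 0) :
    ∫ a, p a * f a ∂μ < ∫ a, q a * f a ∂μ := by
  have hf_ne : ¬f =ᵐ[μ] 0 := fun hf0 =>
    hw (integral_eq_zero_of_ae (hf0.mono fun a ha => by simp [ha]))
  have hgap : 0 ≤ᵐ[μ] fun a => q a * f a - p a * f a := by
    filter_upwards [hpq, hf] with a hlt hfa
    simpa [← sub_mul] using mul_nonneg (sub_nonneg.2 hlt.le) hfa
  rw [← sub_pos, ← integral_sub hq hp]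
  refine (integral_nonneg_of_ae hgap).lt_of_ne fun h => hf_ne ?_
  filter_upwards [(integral_eq_zero_iff_of_nonneg_ae hgap (hq.sub hp)).1 h.symm, hpq]
    with a ha hlt
  rw [Pi.zero_apply, ← sub_mul, mul_eq_zero] at ha
  exact ha.resolve_left (sub_pos.2 hlt).ne'

theorem integral_mul_div_integral_mul_lt (hlt : ∀ᵐ a ∂μ, p a < c * q a)
    (hf : ∀ᵐ a ∂μ, 0 ≤ f a) (hp : Integrable (fun a => p a * f a) μ)
    (hq : Integrable (fun a => q a * f a) μ) (hpos : 0 < ∫ a, q a * f a ∂μ) :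
    (∫ a, p a * f a ∂μ) / ∫ a, q a * f a ∂μ < c := by
  rw [div_lt_iff₀ hpos, ← integral_const_mul]
  simpa only [mul_assoc] using
    integral_mul_lt_integral_mul hlt hf hp (by simpa only [mul_assoc] using hq.const_mul c)
      hpos.ne'

theorem lt_integral_mul_div_integral_mul (hlt : ∀ᵐ a ∂μ, c * q a < p a)
    (hf : ∀ᵐ a ∂μ, 0 ≤ f a) (hp : Integrable (fun a => p a * f a) μ)
    (hq : Integrable (fun a => q a * f a) μ) (hpos : 0 < ∫ a, q a * f a ∂μ) :
    c < (∫ a, p a * f a ∂μ) / ∫ a, q a * f a ∂μ := by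
  rw [lt_div_iff₀ hpos, ← integral_const_mul]
  simpa only [mul_assoc] using
    integral_mul_lt_integral_mul hlt hf (by simpa only [mul_assoc] using hq.const_mul c) hp
      hpos.ne'

end RatioOfIntegrals

def StrictlyTotallyPositive₂ {α β : Type*} [LT α] [LT β] (K : α → β → ℝ) : Prop :=
  ∀ x y v w, x < y → v < w → K y v / K x v < K y w / K x w

namespace StrictlyTotallyPositive₂

variable {α β : Type*} [LT α] {K : α → β → ℝ}

theorem swap [LT β] (hpos : ∀ x v, 0 < K x v) (hK : StrictlyTotallyPositive₂ K) :
    StrictlyTotallyPositive₂ (Function.swap K) := by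
  intro v w x y hvw hxy
  have := hK x y v w hxy hvw
  rw [div_lt_div_iff₀ (hpos x v) (hpos x w)] at this
  show K x w / K x v < K y w / K y v
  rw [div_lt_div_iff₀ (hpos x v) (hpos y v)]
  linarith

variable [LinearOrder β] [MeasurableSpace β] [TopologicalSpace β] [OrderClosedTopology β]
  [OpensMeasurableSpace β] {μ : Measure β}

theorem integral_Iio_ratio_lt (hpos : ∀ x v, 0 < K x v) (hK : StrictlyTotallyPositive₂ K)
    {x y : α} (hxy : x < y) (z : β) {f : β → ℝ} (hf : ∀ w, 0 ≤ f w)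
    (hy : IntegrableOn (fun w => K y w * f w) (Iio z) μ)
    (hx : IntegrableOn (fun w => K x w * f w) (Iio z) μ)
    (hx_pos : 0 < ∫ w in Iio z, K x w * f w ∂μ) :
    (∫ w in Iio z, K y w * f w ∂μ) / (∫ w in Iio z, K x w * f w ∂μ) < K y z / K x z :=
  integral_mul_div_integral_mul_lt
    (ae_restrict_of_forall_mem measurableSet_Iio fun w hw =>
      (div_lt_iff₀ (hpos x w)).1 (hK x y w z hxy hw))
    (ae_of_all _ hf) hy hx hx_pos

theorem ratio_lt_integral_Ioi (hpos : ∀ x v, 0 < K x v) (hK : StrictlyTotallyPositive₂ K)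
    {x y : α} (hxy : x < y) (z : β) {f : β → ℝ} (hf : ∀ w, 0 ≤ f w)
    (hy : IntegrableOn (fun w => K y w * f w) (Ioi z) μ)
    (hx : IntegrableOn (fun w => K x w * f w) (Ioi z) μ)
    (hx_pos : 0 < ∫ w in Ioi z, K x w * f w ∂μ) :
    K y z / K x z < (∫ w in Ioi z, K y w * f w ∂μ) / (∫ w in Ioi z, K x w * f w ∂μ) :=
  lt_integral_mul_div_integral_mul
    (ae_restrict_of_forall_mem measurableSet_Ioi fun w hw =>
      (lt_div_iff₀ (hpos x w)).1 (hK x y z w hxy hw))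
    (ae_of_all _ hf) hy hx hx_pos

end StrictlyTotallyPositive₂

theorem totally_positive_kernel_comparison_general
    (K : ℝ → ℝ → ℝ)
    (hK_pos : ∀ x y, 0 < K x y)
    (hTP : ∀ x y v w : ℝ, x < y → v < w → K y v / K x v < K y w / K x w) :
    -- (i) comparison in the terminal variable:
    (∀ x y z : ℝ, x < y → ∀ f : ℝ → ℝ, Measurable f → (∀ w, 0 ≤ f w) →
      IntegrableOn (fun w => K y w * f w) (Set.Iio z) →
      IntegrableOn (fun w => K x w * f w) (Set.Iio z) →
      IntegrableOn (fun w => K y w * f w) (Set.Ioi z) →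
      IntegrableOn (fun w => K x w * f w) (Set.Ioi z) →
      (0 < ∫ w in Set.Iio z, K y w * f w) →
      (0 < ∫ w in Set.Iio z, K x w * f w) →
      (0 < ∫ w in Set.Ioi z, K y w * f w) →
      (0 < ∫ w in Set.Ioi z, K x w * f w) →
      (∫ w in Set.Iio z, K y w * f w) / (∫ w in Set.Iio z, K x w * f w) < K y z / K x z ∧
      K y z / K x z < (∫ w in Set.Ioi z, K y w * f w) / (∫ w in Set.Ioi z, K x w * f w)) ∧
    -- (ii) comparison in the initial variable:
    (∀ v z x : ℝ, v < z → ∀ f : ℝ → ℝ, Measurable f → (∀ u, 0 ≤ f u) →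
      IntegrableOn (fun u => K u z * f u) (Set.Iio x) →
      IntegrableOn (fun u => K u v * f u) (Set.Iio x) →
      IntegrableOn (fun u => K u z * f u) (Set.Ioi x) →
      IntegrableOn (fun u => K u v * f u) (Set.Ioi x) →
      (0 < ∫ u in Set.Iio x, K u z * f u) →
      (0 < ∫ u in Set.Iio x, K u v * f u) →
      (0 < ∫ u in Set.Ioi x, K u z * f u) →
      (0 < ∫ u in Set.Ioi x, K u v * f u) →
      (∫ u in Set.Iio x, K u z * f u) / (∫ u in Set.Iio x, K u v * f u) < K x z / K x v ∧
      K x z / K x v < (∫ u in Set.Ioi x, K u z * f u) / (∫ u in Set.Ioi x, K u v * f u)) := by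
  have hK : StrictlyTotallyPositive₂ K := hTP
  have hK_swap := hK.swap hK_pos
  have hK_swap_pos : ∀ v x, 0 < Function.swap K v x := fun v x => hK_pos x v
  refine ⟨fun x y z hxy f _ hf hy_Iio hx_Iio hy_Ioi hx_Ioi _ hx_Iio_pos _ hx_Ioi_pos =>
      ⟨hK.integral_Iio_ratio_lt hK_pos hxy z hf hy_Iio hx_Iio hx_Iio_pos,
        hK.ratio_lt_integral_Ioi hK_pos hxy z hf hy_Ioi hx_Ioi hx_Ioi_pos⟩,
    fun v z x hvz f _ hf hz_Iio hv_Iio hz_Ioi hv_Ioi _ hv_Iio_pos _ hv_Ioi_pos =>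
      ⟨hK_swap.integral_Iio_ratio_lt hK_swap_pos hvz x hf hz_Iio hv_Iio hv_Iio_pos,
        hK_swap.ratio_lt_integral_Ioi hK_swap_pos hvz x hf hz_Ioi hv_Ioi hv_Ioi_pos⟩⟩

/-- Comparison principle (Lemma `lm:comp`) for a strictly totally positive kernel
`K(terminal, initial)`: crossing inequalities for ratios of integrals against the
kernel, in both the terminal and initial variables. -/
theorem totally_positive_kernel_comparison
    (K : ℝ → ℝ → ℝ)
    (hK_meas : Measurable (Function.uncurry K))
    (hK_pos : ∀ x y, 0 < K x y)
    (hTP : ∀ x y v w : ℝ, x < y → v < w → K y v / K x v < K y w / K x w) :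
    -- (i) comparison in the terminal variable:
    (∀ x y z : ℝ, x < y → ∀ f : ℝ → ℝ, Measurable f → (∀ w, 0 ≤ f w) →
      IntegrableOn (fun w => K y w * f w) (Set.Iio z) →
      IntegrableOn (fun w => K x w * f w) (Set.Iio z) →
      IntegrableOn (fun w => K y w * f w) (Set.Ioi z) →
      IntegrableOn (fun w => K x w * f w) (Set.Ioi z) →
      (0 < ∫ w in Set.Iio z, K y w * f w) →
      (0 < ∫ w in Set.Iio z, K x w * f w) →
      (0 < ∫ w in Set.Ioi z, K y w * f w) →
      (0 < ∫ w in Set.Ioi z, K x w * f w) →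
      (∫ w in Set.Iio z, K y w * f w) / (∫ w in Set.Iio z, K x w * f w) < K y z / K x z ∧
      K y z / K x z < (∫ w in Set.Ioi z, K y w * f w) / (∫ w in Set.Ioi z, K x w * f w)) ∧
    -- (ii) comparison in the initial variable:
    (∀ v z x : ℝ, v < z → ∀ f : ℝ → ℝ, Measurable f → (∀ u, 0 ≤ f u) →
      IntegrableOn (fun u => K u z * f u) (Set.Iio x) →
      IntegrableOn (fun u => K u v * f u) (Set.Iio x) →
      IntegrableOn (fun u => K u z * f u) (Set.Ioi x) →
      IntegrableOn (fun u => K u v * f u) (Set.Ioi x) →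
      (0 < ∫ u in Set.Iio x, K u z * f u) →
      (0 < ∫ u in Set.Iio x, K u v * f u) →
      (0 < ∫ u in Set.Ioi x, K u z * f u) →
      (0 < ∫ u in Set.Ioi x, K u v * f u) →
      (∫ u in Set.Iio x, K u z * f u) / (∫ u in Set.Iio x, K u v * f u) < K x z / K x v ∧
      K x z / K x v < (∫ u in Set.Ioi x, K u z * f u) / (∫ u in Set.Ioi x, K u v * f u)) :=
  totally_positive_kernel_comparison_general K hK_pos hTP
end
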